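/- (Improved localized symbol bound for the inverse phase when ν = −.) Let d ≥ 1. There is a constant C > 0, depending only on d and ψ, such that for every μ ∈ {+1, −1}, all integers k₁, k₂ ≥ −1 with k₁ ≤ k₂ − 6 and k₂ ≥ 0, and all ξ, η ∈ ℝ^d with ξ in the support of ψ_{[k₁−1,k₁+1]} and η in the support of ψ_{[k₂−1,k₂+1]}: one has −Φ_{μ,−1}(ξ, η) ≥ C^{−1} 2^{k₂}, and Σ_{l=0}^{d+1} ( 2^{l k₁} |∂_ξ^l (Φ_{μ,−1}^{−1})(ξ, η)| + 2^{l k₂} |∂_η^l (Φ_{μ,−1}^{−1})(ξ, η)| ) ≤ C · 2^{−k₂}, where ∂_ξ^l (resp. ∂_η^l) denotes the l-th derivative in ξ with η fixed (resp. in η with ξ fixed) and |·| the corresponding operator norm. -/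

import Mathlib

open MeasureTheory Complex
open scoped ENNReal FourierTransform

noncomputable section

/-- Euclidean space ℝ^d. -/
abbrev Ed (d : ℕ) := EuclideanSpace ℝ (Fin d)

/-- Japanese bracket ⟨ξ⟩ = (1+|ξ|²)^{1/2}. -/
def jap {d : ℕ} (ξ : Ed d) : ℝ := Real.sqrt (1 + ‖ξ‖ ^ 2)

/-- The Klein–Gordon resonance phase Φ_{μν}(ξ₁,ξ₂) = −⟨ξ₁+ξ₂⟩ + μ⟨ξ₁⟩ + ν⟨ξ₂⟩. -/
def phase {d : ℕ} (μ ν : ℝ) (ξ₁ ξ₂ : Ed d) : ℝ :=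
  -jap (ξ₁ + ξ₂) + μ * jap ξ₁ + ν * jap ξ₂
/-- ψ is a smooth cutoff, ψ : ℝ → [0,1], ψ ≡ 1 on [-5/4, 5/4], ψ ≡ 0 off [-8/5, 8/5]. -/
def IsCutoff (ψ : ℝ → ℝ) : Prop :=
  ContDiff ℝ (⊤ : ℕ∞) ψ ∧ (∀ x, ψ x ∈ Set.Icc (0 : ℝ) 1) ∧
    (∀ x ∈ Set.Icc (-(5 / 4) : ℝ) (5 / 4), ψ x = 1) ∧
    (∀ x ∉ Set.Icc (-(8 / 5) : ℝ) (8 / 5), ψ x = 0)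

/-- The Littlewood–Paley cutoffs ψ_k(r), k ≥ -1 (extended by 0 to k < -1):
ψ_{-1}(r) = ψ(2r) and ψ_k(r) = ψ(r/2^k) − ψ(r/2^{k-1}) for k ≥ 0. -/
def psiCut (ψ : ℝ → ℝ) (k : ℤ) (r : ℝ) : ℝ :=
  if k < -1 then 0
  else if k = -1 then ψ (2 * r)
  else ψ (r / 2 ^ k) - ψ (r / 2 ^ (k - 1))

/-- ψ_{[k−1,k+1]}(ξ) = Σ_{j∈[k−1,k+1]∩ℤ, j ≥ −1} ψ_j(|ξ|). -/
def psiBand {d : ℕ} (ψ : ℝ → ℝ) (k : ℤ) (ξ : Ed d) : ℝ :=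
  psiCut ψ (k - 1) ‖ξ‖ + psiCut ψ k ‖ξ‖ + psiCut ψ (k + 1) ‖ξ‖

open scoped ContDiff

section Aux

variable {d : ℕ}

lemma natCast_le_inftyS (m : ℕ) : (m : WithTop ℕ∞) ≤ (∞ : WithTop ℕ∞) := by
  exact_mod_cast le_top

lemma natCast_lt_inftyS (m : ℕ) : (m : WithTop ℕ∞) < (∞ : WithTop ℕ∞) := by
  have h1 : ((m:ℕ∞) : WithTop ℕ∞) < ((⊤:ℕ∞) : WithTop ℕ∞) :=
    WithTop.coe_lt_coe.2 (WithTop.coe_lt_top m)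
  simpa using h1

lemma jap_nonneg (ξ : Ed d) : 0 ≤ jap ξ := Real.sqrt_nonneg _

lemma one_le_jap (ξ : Ed d) : 1 ≤ jap ξ := by
  have h : Real.sqrt 1 ≤ Real.sqrt (1 + ‖ξ‖ ^ 2) := Real.sqrt_le_sqrt (by nlinarith [sq_nonneg ‖ξ‖])
  rw [Real.sqrt_one] at h
  exact h

lemma jap_pos (ξ : Ed d) : 0 < jap ξ := lt_of_lt_of_le one_pos (one_le_jap ξ)

lemma norm_le_jap (ξ : Ed d) : ‖ξ‖ ≤ jap ξ := by
  have h : Real.sqrt (‖ξ‖ ^ 2) ≤ Real.sqrt (1 + ‖ξ‖ ^ 2) := Real.sqrt_le_sqrt (by nlinarith)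
  simpa [jap, Real.sqrt_sq (norm_nonneg ξ)] using h

lemma jap_le_one_add (ξ : Ed d) : jap ξ ≤ 1 + ‖ξ‖ := by
  have h : Real.sqrt (1 + ‖ξ‖ ^ 2) ≤ Real.sqrt ((1 + ‖ξ‖) ^ 2) :=
    Real.sqrt_le_sqrt (by nlinarith [norm_nonneg ξ])
  have h2 : Real.sqrt ((1 + ‖ξ‖) ^ 2) = 1 + ‖ξ‖ := Real.sqrt_sq (by positivity)
  rw [h2] at h
  exact h

lemma contDiff_sqrt_normsq {c : ℝ} (hc : 0 < c) :
    ContDiff ℝ ∞ (fun v : Ed d => Real.sqrt (c + ‖v‖ ^ 2)) := by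
  rw [contDiff_iff_contDiffAt]
  intro v
  exact ((contDiff_const.add (contDiff_norm_sq ℝ)).contDiffAt).sqrt (by positivity)

lemma contDiff_jap : ContDiff ℝ ∞ (jap (d := d)) := contDiff_sqrt_normsq one_pos

lemma iteratedFDeriv_comp_const_add {E F : Type*} [NormedAddCommGroup E] [NormedSpace ℝ E]
    [NormedAddCommGroup F] [NormedSpace ℝ F] {f : E → F} (hf : ContDiff ℝ ∞ f) (a : E) :
    ∀ (n : ℕ) (x : E), iteratedFDeriv ℝ n (fun w => f (a + w)) x = iteratedFDeriv ℝ n f (a + x)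
  | 0, x => by
      ext m
      simp
  | (n+1), x => by
      rw [iteratedFDeriv_succ_eq_comp_left, iteratedFDeriv_succ_eq_comp_left]
      simp only [Function.comp_apply]
      congr 1
      have h1 : iteratedFDeriv ℝ n (fun w => f (a + w)) =
          fun y => iteratedFDeriv ℝ n f (a + y) :=
        funext fun y => iteratedFDeriv_comp_const_add hf a n y
      rw [h1]
      have hG : DifferentiableAt ℝ (iteratedFDeriv ℝ n f) (a + x) :=
        (ContDiff.differentiable_iteratedFDeriv (natCast_lt_inftyS n) hf).differentiableAt
      have h2 : HasFDerivAt (fun y : E => a + y) (ContinuousLinearMap.id ℝ E) x :=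
        (hasFDerivAt_id x).const_add a
      have h3 := hG.hasFDerivAt.comp x h2
      rw [ContinuousLinearMap.comp_id] at h3
      exact h3.fderiv

lemma norm_iteratedFDeriv_comp_affine {E F : Type*} [NormedAddCommGroup E] [NormedSpace ℝ E]
    [NormedAddCommGroup F] [NormedSpace ℝ F] {f : E → F} (hf : ContDiff ℝ ∞ f) (a : E) (c : ℝ)
    (n : ℕ) (x : E) :
    ‖iteratedFDeriv ℝ n (fun w => f (a + c • w)) x‖ ≤
      ‖iteratedFDeriv ℝ n f (a + c • x)‖ * |c| ^ n := by
  have hg : ContDiff ℝ ∞ (fun y : E => f (a + y)) := hf.comp (contDiff_const.add contDiff_id)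
  have e1 : (fun w : E => f (a + c • w)) =
      (fun y : E => f (a + y)) ∘ (c • ContinuousLinearMap.id ℝ E) := by
    funext w
    simp [Function.comp]
  rw [e1, ContinuousLinearMap.iteratedFDeriv_comp_right _ hg x (natCast_le_inftyS n)]
  refine le_trans (ContinuousMultilinearMap.norm_compContinuousLinearMap_le _ _) ?_
  have hpt : iteratedFDeriv ℝ n (fun y : E => f (a + y)) ((c • ContinuousLinearMap.id ℝ E) x)
      = iteratedFDeriv ℝ n f (a + c • x) := by
    have : (c • ContinuousLinearMap.id ℝ E) x = c • x := by simp
    rw [this, iteratedFDeriv_comp_const_add hf a n (c • x)]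
  rw [hpt]
  have hprod : (∏ _i : Fin n, ‖c • ContinuousLinearMap.id ℝ E‖) ≤ |c| ^ n := by
    have h1 : ‖c • ContinuousLinearMap.id ℝ E‖ ≤ |c| := by
      refine le_trans (ContinuousLinearMap.opNorm_smul_le c _) ?_
      rw [Real.norm_eq_abs]
      exact mul_le_of_le_one_right (abs_nonneg c) ContinuousLinearMap.norm_id_le
    calc (∏ _i : Fin n, ‖c • ContinuousLinearMap.id ℝ E‖)
        = ‖c • ContinuousLinearMap.id ℝ E‖ ^ n := by
          rw [Finset.prod_const, Finset.card_univ, Fintype.card_fin]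
      _ ≤ |c| ^ n := pow_le_pow_left₀ (norm_nonneg _) h1 n
  exact mul_le_mul_of_nonneg_left hprod (norm_nonneg _)

lemma iteratedFDeriv_congr_nhds {E F : Type*} [NormedAddCommGroup E] [NormedSpace ℝ E]
    [NormedAddCommGroup F] [NormedSpace ℝ F] {f g : E → F} {x : E} (h : f =ᶠ[nhds x] g) (n : ℕ) :
    iteratedFDeriv ℝ n f x = iteratedFDeriv ℝ n g x := by
  rw [← iteratedFDerivWithin_univ, ← iteratedFDerivWithin_univ]
  refine Filter.EventuallyEq.iteratedFDerivWithin_eq ?_ h.self_of_nhds n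
  rwa [nhdsWithin_univ]

end Aux
section Ext

/-- Smooth global extension of `Real.sqrt` agreeing with it on `(1/2, ∞)`. -/
def sqrtext : ℝ → ℝ := fun t => Real.smoothTransition (4 * t - 1) * Real.sqrt t

lemma sqrtext_eq {t : ℝ} (h : 1/2 ≤ t) : sqrtext t = Real.sqrt t := by
  unfold sqrtext
  rw [Real.smoothTransition.one_of_one_le (by linarith), one_mul]

lemma contDiff_sqrtext : ContDiff ℝ ∞ sqrtext := by
  rw [contDiff_iff_contDiffAt]
  intro t
  rcases ne_or_eq t 0 with ht | rfl
  · exact ((Real.smoothTransition.contDiff.comp (by fun_prop)).contDiffAt).mul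
      (Real.contDiffAt_sqrt ht)
  · refine ContDiffAt.congr_of_eventuallyEq (contDiffAt_const (c := 0)) ?_
    have hmem : Set.Iio (1/4 : ℝ) ∈ nhds (0:ℝ) := Iio_mem_nhds (by norm_num)
    filter_upwards [hmem] with s hs
    have hs' : s < 1/4 := hs
    unfold sqrtext
    rw [Real.smoothTransition.zero_of_nonpos (by linarith), zero_mul]

/-- Smooth global extension of `Inv.inv` agreeing with it on `(-∞, -1/7]`. -/
def invext : ℝ → ℝ := fun t => Real.smoothTransition ((-1/8 - t) * 56) * t⁻¹

lemma invext_eq {t : ℝ} (h : t ≤ -1/7) : invext t = t⁻¹ := by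
  unfold invext
  rw [Real.smoothTransition.one_of_one_le (by linarith), one_mul]

lemma contDiff_invext : ContDiff ℝ ∞ invext := by
  rw [contDiff_iff_contDiffAt]
  intro t
  rcases ne_or_eq t 0 with ht | rfl
  · exact ((Real.smoothTransition.contDiff.comp (by fun_prop)).contDiffAt).mul
      (contDiffAt_inv ℝ ht)
  · refine ContDiffAt.congr_of_eventuallyEq (contDiffAt_const (c := 0)) ?_
    have hmem : Set.Ioi (-1/8 : ℝ) ∈ nhds (0:ℝ) := Ioi_mem_nhds (by norm_num)
    filter_upwards [hmem] with s hs
    have hs' : -1/8 < s := hs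
    unfold invext
    rw [Real.smoothTransition.zero_of_nonpos (by nlinarith), zero_mul]

end Ext
section Band

variable {d : ℕ}

lemma psiCut_support {ψ : ℝ → ℝ} (hψ : IsCutoff ψ) {j : ℤ} {r : ℝ} (hr : 0 ≤ r)
    (h : psiCut ψ j r ≠ 0) :
    r ≤ 8/5 * 2 ^ j ∧ (0 ≤ j → 5/8 * (2:ℝ) ^ j ≤ r) := by
  obtain ⟨-, -, hone, hzero⟩ := hψ
  unfold psiCut at h
  split_ifs at h with h1 h2
  · exact absurd rfl h
  · subst h2
    refine ⟨?_, fun h0 => by omega⟩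
    by_contra hc
    push_neg at hc
    have h8 : (8:ℝ)/5 * 2 ^ (-1:ℤ) = 4/5 := by norm_num
    rw [h8] at hc
    refine h (hzero _ fun hm => ?_)
    have := hm.2
    linarith
  · have hj : 0 ≤ j := by omega
    have hApos : (0:ℝ) < 2 ^ j := zpow_pos two_pos j
    have hA1 : (2:ℝ) ^ (j - 1) = 2 ^ j / 2 := by
      rw [zpow_sub₀ two_ne_zero, zpow_one]
    constructor
    · by_contra hc
      push_neg at hc
      have e1 : ψ (r / 2 ^ j) = 0 := by
        refine hzero _ fun hm => ?_
        have h2' := hm.2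
        rw [div_le_iff₀ hApos] at h2'
        linarith
      have e2 : ψ (r / 2 ^ (j - 1)) = 0 := by
        refine hzero _ fun hm => ?_
        have h2' := hm.2
        rw [hA1, div_le_iff₀ (by linarith)] at h2'
        nlinarith
      rw [e1, e2, sub_zero] at h
      exact h rfl
    · intro _
      by_contra hc
      push_neg at hc
      have e1 : ψ (r / 2 ^ j) = 1 := by
        have hnn : (0:ℝ) ≤ r / 2 ^ j := by positivity
        refine hone _ ⟨by linarith, ?_⟩
        rw [div_le_iff₀ hApos]
        nlinarith
      have e2 : ψ (r / 2 ^ (j - 1)) = 1 := by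
        have hnn : (0:ℝ) ≤ r / 2 ^ (j-1) := by rw [hA1]; positivity
        refine hone _ ⟨by linarith, ?_⟩
        rw [hA1, div_le_iff₀ (by linarith)]
        nlinarith
      rw [e1, e2, sub_self] at h
      exact h rfl

lemma band_bounds {ψ : ℝ → ℝ} (hψ : IsCutoff ψ) {k : ℤ} {ξ : Ed d}
    (h : psiBand ψ k ξ ≠ 0) :
    ‖ξ‖ ≤ 4 * 2 ^ k ∧ (1/4 : ℝ) * 2 ^ k ≤ jap ξ ∧ (1 ≤ k → (1/4 : ℝ) * 2 ^ k ≤ ‖ξ‖) := by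
  have hex : ∃ j, (k - 1 ≤ j ∧ j ≤ k + 1) ∧ psiCut ψ j ‖ξ‖ ≠ 0 := by
    by_contra hc
    push_neg at hc
    refine h ?_
    unfold psiBand
    rw [hc (k-1) ⟨by omega, by omega⟩, hc k ⟨by omega, by omega⟩, hc (k+1) ⟨by omega, by omega⟩]
    ring
  obtain ⟨j, ⟨hj1, hj2⟩, hj⟩ := hex
  obtain ⟨hup, hlow⟩ := psiCut_support hψ (norm_nonneg ξ) hj
  have h2k : (0:ℝ) < 2 ^ k := zpow_pos two_pos k
  have hupk : ‖ξ‖ ≤ 4 * 2 ^ k := by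
    refine hup.trans ?_
    have hm : (2:ℝ) ^ j ≤ 2 ^ (k+1) := zpow_le_zpow_right₀ one_le_two hj2
    have e : (2:ℝ) ^ (k+1) = 2 * 2 ^ k := by
      rw [zpow_add₀ two_ne_zero, zpow_one]; ring
    nlinarith
  have hlowk : 1 ≤ k → (1/4 : ℝ) * 2 ^ k ≤ ‖ξ‖ := by
    intro hk1
    have hj0 : 0 ≤ j := by omega
    have hlo := hlow hj0
    have h1 : (2:ℝ) ^ (k-1) ≤ 2 ^ j := zpow_le_zpow_right₀ one_le_two hj1
    have e : (2:ℝ) ^ (k-1) = 2 ^ k / 2 := by rw [zpow_sub₀ two_ne_zero, zpow_one]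
    nlinarith
  refine ⟨hupk, ?_, hlowk⟩
  rcases le_or_gt k 0 with hk0 | hk0
  · have h1 : (2:ℝ) ^ k ≤ 1 := zpow_le_one_of_nonpos₀ one_le_two hk0
    nlinarith [one_le_jap ξ]
  · have := hlowk hk0
    nlinarith [norm_le_jap ξ]

end Band
section JapBounds

variable {d : ℕ}

lemma sqrt_unit_bound (d N : ℕ) : ∃ B : ℝ, 1 ≤ B ∧ ∀ (ε : ℝ), 0 < ε → ∀ y : Ed d,
    ε + ‖y‖ ^ 2 = 1 → ∀ i ≤ N,
    ‖iteratedFDeriv ℝ i (fun v : Ed d => Real.sqrt (ε + ‖v‖ ^ 2)) y‖ ≤ B := by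
  have hQ : ContDiff ℝ ∞ (fun v : Ed d => ‖v‖ ^ 2) := contDiff_norm_sq ℝ
  have hcont : ContinuousOn
      (fun y : Ed d => ∑ j ∈ Finset.range (N+1), ‖iteratedFDeriv ℝ j (fun v : Ed d => ‖v‖ ^ 2) y‖)
      (Metric.closedBall 0 1) := by
    apply Continuous.continuousOn
    refine continuous_finset_sum _ fun j _ => ?_
    exact (ContDiff.continuous_iteratedFDeriv (natCast_le_inftyS j) hQ).norm
  obtain ⟨M, hM⟩ := (isCompact_closedBall (0 : Ed d) 1).exists_bound_of_continuousOn hcont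
  set D : ℝ := max 1 M with hD
  have hD1 : (1:ℝ) ≤ D := le_max_left _ _
  set Cs : ℝ := max 1 (∑ j ∈ Finset.range (N+1), ‖iteratedFDeriv ℝ j sqrtext 1‖) with hCs
  have hCs1 : (1:ℝ) ≤ Cs := le_max_left _ _
  have hfac : (1:ℝ) ≤ (Nat.factorial N : ℝ) := by exact_mod_cast Nat.one_le_iff_ne_zero.2 (Nat.factorial_ne_zero N)
  refine ⟨(Nat.factorial N : ℝ) * Cs * D ^ N, ?_, ?_⟩
  · have hpw : (1:ℝ) ≤ D ^ N := one_le_pow₀ hD1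
    calc (1:ℝ) = 1 * 1 * 1 := by ring
      _ ≤ (Nat.factorial N : ℝ) * Cs * D ^ N :=
        mul_le_mul (mul_le_mul hfac hCs1 zero_le_one (by linarith)) hpw zero_le_one
          (by nlinarith)
  intro ε hε y hy i hiN
  have hyball : ‖y‖ ≤ 1 := by nlinarith [norm_nonneg y]
  have hq : ContDiff ℝ ∞ (fun v : Ed d => ε + ‖v‖ ^ 2) := contDiff_const.add hQ
  have hqy : ε + ‖y‖ ^ 2 = 1 := hy
  have key : iteratedFDeriv ℝ i (fun v : Ed d => Real.sqrt (ε + ‖v‖ ^ 2)) y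
      = iteratedFDeriv ℝ i (sqrtext ∘ (fun v : Ed d => ε + ‖v‖ ^ 2)) y := by
    apply iteratedFDeriv_congr_nhds
    have hU : (fun v : Ed d => ε + ‖v‖ ^ 2) ⁻¹' (Set.Ioi (1/2 : ℝ)) ∈ nhds y := by
      refine (isOpen_Ioi.preimage hq.continuous).mem_nhds ?_
      simp only [Set.mem_preimage, Set.mem_Ioi, hqy]
      norm_num
    filter_upwards [hU] with v hv
    exact (sqrtext_eq (le_of_lt hv)).symm
  rw [key]
  have hcomp := norm_iteratedFDeriv_comp_le (g := sqrtext) (f := fun v : Ed d => ε + ‖v‖ ^ 2)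
    contDiff_sqrtext hq (natCast_le_inftyS i) y (C := Cs) (D := D) ?_ ?_
  · refine hcomp.trans ?_
    have h1 : (Nat.factorial i : ℝ) ≤ (Nat.factorial N : ℝ) := by exact_mod_cast Nat.factorial_le hiN
    have h2 : D ^ i ≤ D ^ N := pow_le_pow_right₀ hD1 hiN
    have h3 : (0:ℝ) < D ^ i := by positivity
    have h5 : (Nat.factorial i : ℝ) * Cs ≤ (Nat.factorial N : ℝ) * Cs :=
      mul_le_mul_of_nonneg_right h1 (by linarith)
    exact mul_le_mul h5 h2 h3.le (by nlinarith)
  · intro j hj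
    have hpt : ((fun v : Ed d => ε + ‖v‖ ^ 2) y) = 1 := hqy
    rw [hqy]
    refine le_trans ?_ (le_max_right _ _)
    exact Finset.single_le_sum (f := fun j => ‖iteratedFDeriv ℝ j sqrtext 1‖)
      (fun _ _ => norm_nonneg _) (Finset.mem_range.2 (by omega))
  · intro j hj1 hj2
    have hval : iteratedFDeriv ℝ j (fun v : Ed d => ε + ‖v‖ ^ 2) y
        = iteratedFDeriv ℝ j (fun v : Ed d => ‖v‖ ^ 2) y := by
      have hsplit : (fun v : Ed d => ε + ‖v‖ ^ 2)
          = (fun _ : Ed d => ε) + (fun v : Ed d => ‖v‖ ^ 2) := rfl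
      rw [hsplit, iteratedFDeriv_add_apply (contDiff_const.of_le (natCast_le_inftyS j)).contDiffAt
        (hQ.of_le (natCast_le_inftyS j)).contDiffAt]
      rw [iteratedFDeriv_const_of_ne (by omega : j ≠ 0)]
      simp
    rw [hval]
    have hmem : y ∈ Metric.closedBall (0 : Ed d) 1 := by
      simpa [Metric.mem_closedBall] using hyball
    have hsum : ‖iteratedFDeriv ℝ j (fun v : Ed d => ‖v‖ ^ 2) y‖
        ≤ ∑ j' ∈ Finset.range (N+1), ‖iteratedFDeriv ℝ j' (fun v : Ed d => ‖v‖ ^ 2) y‖ :=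
      Finset.single_le_sum (f := fun j' => ‖iteratedFDeriv ℝ j' (fun v : Ed d => ‖v‖ ^ 2) y‖)
        (fun _ _ => norm_nonneg _) (Finset.mem_range.2 (by omega))
    have hMy := hM y hmem
    rw [Real.norm_eq_abs] at hMy
    have : ‖iteratedFDeriv ℝ j (fun v : Ed d => ‖v‖ ^ 2) y‖ ≤ D := by
      refine le_trans (hsum.trans (le_abs_self _)) (hMy.trans (le_max_right _ _))
    exact this.trans (le_self_pow₀ hD1 (by omega))

end JapBounds
lemma jap_deriv_bound (d N : ℕ) : ∃ B : ℝ, 1 ≤ B ∧ ∀ x : Ed d, ∀ i ≤ N,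
    ‖iteratedFDeriv ℝ i (jap (d := d)) x‖ * jap x ^ i ≤ B * jap x := by
  obtain ⟨B, hB1, hB⟩ := sqrt_unit_bound d N
  refine ⟨B, hB1, fun x i hi => ?_⟩
  set R : ℝ := jap x with hR
  have hR1 : 1 ≤ R := one_le_jap x
  have hRpos : 0 < R := by linarith
  set ε : ℝ := (R ^ 2)⁻¹ with hε
  have hεpos : 0 < ε := by positivity
  have hsq : R ^ 2 = 1 + ‖x‖ ^ 2 := Real.sq_sqrt (by positivity)
  have hyy : ε + ‖(0 : Ed d) + R⁻¹ • x‖ ^ 2 = 1 := by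
    rw [zero_add, norm_smul, Real.norm_eq_abs, abs_of_pos (by positivity), mul_pow, hε, hsq]
    field_simp
    try rw [hsq]
    try ring
  have hfun : jap (d := d) = fun v : Ed d => R • Real.sqrt (ε + ‖(0 : Ed d) + R⁻¹ • v‖ ^ 2) := by
    funext v
    show Real.sqrt (1 + ‖v‖ ^ 2) = R • Real.sqrt (ε + ‖(0 : Ed d) + R⁻¹ • v‖ ^ 2)
    rw [smul_eq_mul, zero_add, norm_smul, Real.norm_eq_abs, abs_of_pos (by positivity), mul_pow]
    have h2 : R * Real.sqrt (ε + R⁻¹ ^ 2 * ‖v‖ ^ 2)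
        = Real.sqrt (R ^ 2 * (ε + R⁻¹ ^ 2 * ‖v‖ ^ 2)) := by
      rw [Real.sqrt_mul (by positivity), Real.sqrt_sq hRpos.le]
    rw [h2]
    congr 1
    rw [hε]
    field_simp
    try rw [hsq]
    try ring
  have hinner : ContDiff ℝ ∞ (fun v : Ed d => Real.sqrt (ε + ‖(0 : Ed d) + R⁻¹ • v‖ ^ 2)) := by
    exact (contDiff_sqrt_normsq hεpos).comp (contDiff_const.add (contDiff_id.const_smul R⁻¹))
  have e1 : iteratedFDeriv ℝ i (jap (d := d)) x
      = R • iteratedFDeriv ℝ i (fun v : Ed d => Real.sqrt (ε + ‖(0 : Ed d) + R⁻¹ • v‖ ^ 2)) x := by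
    rw [hfun]
    exact iteratedFDeriv_const_smul_apply' (hinner.of_le (natCast_le_inftyS i)).contDiffAt
  have e2 : ‖iteratedFDeriv ℝ i (fun v : Ed d => Real.sqrt (ε + ‖(0 : Ed d) + R⁻¹ • v‖ ^ 2)) x‖
      ≤ ‖iteratedFDeriv ℝ i (fun v : Ed d => Real.sqrt (ε + ‖v‖ ^ 2)) ((0 : Ed d) + R⁻¹ • x)‖
        * |R⁻¹| ^ i :=
    norm_iteratedFDeriv_comp_affine (contDiff_sqrt_normsq hεpos) (0 : Ed d) R⁻¹ i x
  have e3 : ‖iteratedFDeriv ℝ i (fun v : Ed d => Real.sqrt (ε + ‖v‖ ^ 2)) ((0 : Ed d) + R⁻¹ • x)‖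
      ≤ B := hB ε hεpos _ hyy i hi
  have habs : |R⁻¹| = R⁻¹ := abs_of_pos (by positivity)
  have hRR : R⁻¹ ^ i * R ^ i = 1 := by
    rw [← mul_pow, inv_mul_cancel₀ hRpos.ne', one_pow]
  rw [e1, norm_smul, Real.norm_eq_abs, abs_of_pos hRpos]
  calc R * ‖iteratedFDeriv ℝ i (fun v : Ed d => Real.sqrt (ε + ‖(0:Ed d) + R⁻¹ • v‖ ^ 2)) x‖
        * R ^ i
      ≤ R * (B * R⁻¹ ^ i) * R ^ i := by
        have hle : ‖iteratedFDeriv ℝ i (fun v : Ed d => Real.sqrt (ε + ‖(0:Ed d) + R⁻¹ • v‖ ^ 2)) x‖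
            ≤ B * R⁻¹ ^ i := by
          refine le_trans e2 ?_
          rw [habs]
          exact mul_le_mul_of_nonneg_right e3 (by positivity)
        have hnn : (0:ℝ) ≤ R * R ^ i := by positivity
        have h6 := mul_le_mul_of_nonneg_left hle hnn
        have h7 := mul_le_mul_of_nonneg_left e3 (by positivity : (0:ℝ) ≤ R * R ^ i * R⁻¹ ^ i)
        nlinarith [h6, h7]
    _ = B * R * (R⁻¹ ^ i * R ^ i) := by ring
    _ = B * R := by rw [hRR, mul_one]

lemma jap_affine_bound (d N : ℕ) : ∃ B : ℝ, 1 ≤ B ∧ ∀ (a : ℤ) (z : Ed d) (ρ : ℝ),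
    0 < ρ → ρ ≤ jap z → (2:ℝ) ^ a ≤ 16 * ρ → ∀ i, 1 ≤ i → i ≤ N →
    ‖iteratedFDeriv ℝ i (fun w : Ed d => jap (z + (2:ℝ) ^ a • w)) 0‖ ≤ B * ρ := by
  obtain ⟨B0, hB01, hB0⟩ := jap_deriv_bound d N
  have h16 : (1:ℝ) ≤ 16 ^ N := one_le_pow₀ (by norm_num)
  refine ⟨16 ^ N * B0, by nlinarith, fun a z ρ hρ hρz h16a i hi1 hiN => ?_⟩
  have hc : (0:ℝ) < 2 ^ a := zpow_pos two_pos a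
  have key := norm_iteratedFDeriv_comp_affine contDiff_jap z ((2:ℝ) ^ a) i (0 : Ed d)
  rw [smul_zero, add_zero] at key
  have hjz := hB0 z i hiN
  have hjpos := jap_pos z
  obtain ⟨i', rfl⟩ : ∃ i', i = i' + 1 := ⟨i - 1, by omega⟩
  have h1 : ‖iteratedFDeriv ℝ (i'+1) (jap (d := d)) z‖ * jap z ^ i' ≤ B0 := by
    have := hjz
    rw [pow_succ] at this
    have h2 : (‖iteratedFDeriv ℝ (i'+1) (jap (d := d)) z‖ * jap z ^ i') * jap z ≤ B0 * jap z := by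
      nlinarith
    exact le_of_mul_le_mul_right h2 hjpos
  have h2 : ‖iteratedFDeriv ℝ (i'+1) (jap (d := d)) z‖ * ρ ^ i' ≤ B0 := by
    refine le_trans ?_ h1
    have : ρ ^ i' ≤ jap z ^ i' := pow_le_pow_left₀ hρ.le hρz i'
    nlinarith [norm_nonneg (iteratedFDeriv ℝ (i'+1) (jap (d := d)) z)]
  calc ‖iteratedFDeriv ℝ (i'+1) (fun w : Ed d => jap (z + (2:ℝ) ^ a • w)) 0‖
      ≤ ‖iteratedFDeriv ℝ (i'+1) (jap (d := d)) z‖ * |(2:ℝ) ^ a| ^ (i'+1) := key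
    _ ≤ ‖iteratedFDeriv ℝ (i'+1) (jap (d := d)) z‖ * (16 * ρ) ^ (i'+1) := by
        rw [abs_of_pos hc]
        exact mul_le_mul_of_nonneg_left (pow_le_pow_left₀ hc.le h16a _) (norm_nonneg _)
    _ = (‖iteratedFDeriv ℝ (i'+1) (jap (d := d)) z‖ * ρ ^ i') * (16 ^ (i'+1) * ρ) := by ring
    _ ≤ B0 * (16 ^ (i'+1) * ρ) := by
        have hpos : (0:ℝ) ≤ 16 ^ (i'+1) * ρ := by positivity
        exact mul_le_mul_of_nonneg_right h2 hpos
    _ ≤ 16 ^ N * B0 * ρ := by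
        have hpw : (16:ℝ) ^ (i'+1) ≤ 16 ^ N := pow_le_pow_right₀ (by norm_num) (by omega)
        nlinarith [mul_le_mul_of_nonneg_right hpw (mul_nonneg (by linarith : (0:ℝ) ≤ B0) hρ.le)]
set_option maxHeartbeats 2000000 in
lemma core_bound (d N : ℕ) : ∃ C : ℝ, 1 ≤ C ∧
    ∀ (g : Ed d → ℝ), ContDiff ℝ ∞ g →
    ∀ (x : Ed d) (a : ℤ) (s₁ s₂ c₀ : ℝ) (z₁ z₂ : Ed d) (ρ₁ ρ₂ m : ℝ),
      |s₁| ≤ 1 → |s₂| ≤ 1 →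
      (∀ w : Ed d, g (x + (2:ℝ) ^ a • w)
          = s₁ * jap (z₁ + (2:ℝ) ^ a • w) + (s₂ * jap (z₂ + (2:ℝ) ^ a • w) + c₀)) →
      0 < ρ₁ → ρ₁ ≤ jap z₁ → (2:ℝ) ^ a ≤ 16 * ρ₁ → ρ₁ ≤ 2 * m →
      0 < ρ₂ → ρ₂ ≤ jap z₂ → (2:ℝ) ^ a ≤ 16 * ρ₂ → ρ₂ ≤ 2 * m →
      g x = -m → 0 < m →
      ∀ n ≤ N, ‖iteratedFDeriv ℝ n (fun ζ => (g ζ)⁻¹) x‖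
        ≤ C * m⁻¹ * (((2:ℝ) ^ a)⁻¹) ^ n := by
  obtain ⟨B, hB1, hB⟩ := jap_affine_bound d N
  set Cinv : ℝ := max 1 (∑ j ∈ Finset.range (N+1), ‖iteratedFDeriv ℝ j invext (-1)‖) with hCinv
  have hCinv1 : 1 ≤ Cinv := le_max_left _ _
  have hCinvb : ∀ j, j ≤ N → ‖iteratedFDeriv ℝ j invext (-1)‖ ≤ Cinv := fun j hj =>
    (Finset.single_le_sum (f := fun j' => ‖iteratedFDeriv ℝ j' invext (-1)‖)
      (fun _ _ => norm_nonneg _) (Finset.mem_range.2 (by omega))).trans (le_max_right _ _)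
  set D : ℝ := max 1 (4 * B) with hD
  have hD1 : 1 ≤ D := le_max_left _ _
  have hfac : (1:ℝ) ≤ (Nat.factorial N : ℝ) := by
    exact_mod_cast Nat.one_le_iff_ne_zero.2 (Nat.factorial_ne_zero N)
  have hDN : (1:ℝ) ≤ D ^ N := one_le_pow₀ hD1
  refine ⟨(Nat.factorial N : ℝ) * Cinv * D ^ N, ?_, ?_⟩
  · calc (1:ℝ) = 1 * 1 * 1 := by ring
      _ ≤ (Nat.factorial N : ℝ) * Cinv * D ^ N :=
        mul_le_mul (mul_le_mul hfac hCinv1 zero_le_one (by linarith)) hDN zero_le_one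
          (by nlinarith)
  intro g hg x a s₁ s₂ c₀ z₁ z₂ ρ₁ ρ₂ m hs₁ hs₂ hgw hρ₁ hρ₁z h16₁ hρ₁m hρ₂ hρ₂z h16₂ hρ₂m
    hgx hm n hnN
  have hc : (0:ℝ) < (2:ℝ) ^ a := zpow_pos two_pos a
  -- the globally smooth surrogate H
  set H : Ed d → ℝ := fun ζ => m⁻¹ * invext (g ζ / m) with hHdef
  have hH : ContDiff ℝ ∞ H := contDiff_const.mul (contDiff_invext.comp (hg.div_const m))
  have hstep1 : iteratedFDeriv ℝ n (fun ζ => (g ζ)⁻¹) x = iteratedFDeriv ℝ n H x := by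
    apply iteratedFDeriv_congr_nhds
    have hopen : IsOpen {ζ : Ed d | g ζ / m < -(1/7)} :=
      isOpen_lt (hg.continuous.div_const m) continuous_const
    have hUmem : x ∈ {ζ : Ed d | g ζ / m < -(1/7)} := by
      show g x / m < -(1/7)
      rw [hgx, neg_div, div_self hm.ne']
      norm_num
    filter_upwards [hopen.mem_nhds hUmem] with ζ hζ
    have h7 : g ζ / m ≤ -1/7 := by
      have : g ζ / m < -(1/7) := hζ
      linarith
    have hgζ : g ζ < 0 := by
      have := (div_neg_iff).1 (lt_trans hζ (by norm_num) : g ζ / m < 0)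
      rcases this with ⟨h1', h2'⟩ | ⟨h1', h2'⟩
      · linarith
      · exact h1'
    show (g ζ)⁻¹ = H ζ
    rw [hHdef]
    simp only []
    rw [invext_eq h7, inv_div]
    field_simp
  -- rescaling
  set A : Ed d → ℝ := fun w => H (x + (2:ℝ) ^ a • w) with hA
  have hAsm : ContDiff ℝ ∞ A :=
    hH.comp (contDiff_const.add (contDiff_id.const_smul ((2:ℝ) ^ a)))
  have hHA : (fun ζ : Ed d => A (-(((2:ℝ) ^ a)⁻¹ • x) + ((2:ℝ) ^ a)⁻¹ • ζ)) = H := by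
    funext ζ
    show H (x + (2:ℝ) ^ a • (-(((2:ℝ) ^ a)⁻¹ • x) + ((2:ℝ) ^ a)⁻¹ • ζ)) = H ζ
    congr 1
    rw [smul_add, smul_neg, smul_smul, smul_smul, mul_inv_cancel₀ hc.ne', one_smul, one_smul]
    abel
  have hstep2 : ‖iteratedFDeriv ℝ n H x‖
      ≤ ‖iteratedFDeriv ℝ n A 0‖ * |((2:ℝ) ^ a)⁻¹| ^ n := by
    have h := norm_iteratedFDeriv_comp_affine hAsm (-(((2:ℝ) ^ a)⁻¹ • x)) (((2:ℝ) ^ a)⁻¹) n x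
    rw [hHA, neg_add_cancel] at h
    exact h
  -- A as scalar multiple of invext ∘ F
  set F : Ed d → ℝ := fun w => g (x + (2:ℝ) ^ a • w) / m with hF
  have hFsm : ContDiff ℝ ∞ F :=
    (hg.comp (contDiff_const.add (contDiff_id.const_smul ((2:ℝ) ^ a)))).div_const m
  have hAF : A = fun w => m⁻¹ • ((invext ∘ F) w) := rfl
  have hstep3 : ‖iteratedFDeriv ℝ n A 0‖ = m⁻¹ * ‖iteratedFDeriv ℝ n (invext ∘ F) 0‖ := by
    rw [hAF, iteratedFDeriv_const_smul_apply'
      ((contDiff_invext.comp hFsm).of_le (natCast_le_inftyS n)).contDiffAt]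
    rw [norm_smul, Real.norm_eq_abs, abs_of_pos (by positivity)]
  have hF0 : F 0 = -1 := by
    show g (x + (2:ℝ) ^ a • (0 : Ed d)) / m = -1
    rw [smul_zero, add_zero, hgx, neg_div, div_self hm.ne']
  -- derivative bounds for F
  have hFd : ∀ i, 1 ≤ i → i ≤ n → ‖iteratedFDeriv ℝ i F 0‖ ≤ D ^ i := by
    intro i h1 h2
    have hiN : i ≤ N := le_trans h2 hnN
    have hJ1 : ContDiff ℝ ∞ (fun w : Ed d => jap (z₁ + (2:ℝ) ^ a • w)) :=
      contDiff_jap.comp (contDiff_const.add (contDiff_id.const_smul ((2:ℝ) ^ a)))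
    have hJ2 : ContDiff ℝ ∞ (fun w : Ed d => jap (z₂ + (2:ℝ) ^ a • w)) :=
      contDiff_jap.comp (contDiff_const.add (contDiff_id.const_smul ((2:ℝ) ^ a)))
    have hFdecomp : F = fun w : Ed d => (m⁻¹ * s₁) • jap (z₁ + (2:ℝ) ^ a • w)
        + ((m⁻¹ * s₂) • jap (z₂ + (2:ℝ) ^ a • w) + c₀ / m) := by
      funext w
      show g (x + (2:ℝ) ^ a • w) / m = _
      rw [hgw w]
      simp only [smul_eq_mul]
      ring
    have hsm1 : ContDiff ℝ (i : WithTop ℕ∞) (fun w : Ed d => (m⁻¹ * s₁) • jap (z₁ + (2:ℝ) ^ a • w)) :=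
      (hJ1.const_smul (m⁻¹ * s₁)).of_le (natCast_le_inftyS i)
    have hsm2 : ContDiff ℝ (i : WithTop ℕ∞) (fun w : Ed d => (m⁻¹ * s₂) • jap (z₂ + (2:ℝ) ^ a • w)) :=
      (hJ2.const_smul (m⁻¹ * s₂)).of_le (natCast_le_inftyS i)
    have hconst : ContDiff ℝ (i : WithTop ℕ∞) (fun _ : Ed d => c₀ / m) := contDiff_const
    have hsm3 : ContDiff ℝ (i : WithTop ℕ∞)
        (fun w : Ed d => (m⁻¹ * s₂) • jap (z₂ + (2:ℝ) ^ a • w) + c₀ / m) := hsm2.add hconst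
    have hde : iteratedFDeriv ℝ i F 0
        = (m⁻¹ * s₁) • iteratedFDeriv ℝ i (fun w : Ed d => jap (z₁ + (2:ℝ) ^ a • w)) 0
          + ((m⁻¹ * s₂) • iteratedFDeriv ℝ i (fun w : Ed d => jap (z₂ + (2:ℝ) ^ a • w)) 0
            + iteratedFDeriv ℝ i (fun _ : Ed d => c₀ / m) 0) := by
      rw [hFdecomp, iteratedFDeriv_add_apply' hsm1.contDiffAt hsm3.contDiffAt,
        iteratedFDeriv_add_apply' hsm2.contDiffAt hconst.contDiffAt]
      rw [iteratedFDeriv_const_smul_apply' (hJ1.of_le (natCast_le_inftyS i)).contDiffAt,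
        iteratedFDeriv_const_smul_apply' (hJ2.of_le (natCast_le_inftyS i)).contDiffAt]
    have hzero : iteratedFDeriv ℝ i (fun _ : Ed d => c₀ / m) 0 = 0 := by
      rw [iteratedFDeriv_const_of_ne (by omega : i ≠ 0)]
      simp
    have hb1 := hB a z₁ ρ₁ hρ₁ hρ₁z h16₁ i h1 hiN
    have hb2 := hB a z₂ ρ₂ hρ₂ hρ₂z h16₂ i h1 hiN
    have hmi : (0:ℝ) < m⁻¹ := by positivity
    have hn1 : ‖(m⁻¹ * s₁) • iteratedFDeriv ℝ i (fun w : Ed d => jap (z₁ + (2:ℝ) ^ a • w)) 0‖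
        ≤ m⁻¹ * (B * ρ₁) := by
      rw [norm_smul, Real.norm_eq_abs, abs_mul, abs_of_pos hmi, mul_assoc]
      refine mul_le_mul_of_nonneg_left ?_ hmi.le
      set X : ℝ := ‖iteratedFDeriv ℝ i (fun w : Ed d => jap (z₁ + (2:ℝ) ^ a • w)) 0‖ with hX
      have hX0 : (0:ℝ) ≤ X := norm_nonneg _
      calc |s₁| * X ≤ 1 * X := mul_le_mul_of_nonneg_right hs₁ hX0
        _ = X := one_mul _
        _ ≤ B * ρ₁ := hb1
    have hn2 : ‖(m⁻¹ * s₂) • iteratedFDeriv ℝ i (fun w : Ed d => jap (z₂ + (2:ℝ) ^ a • w)) 0‖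
        ≤ m⁻¹ * (B * ρ₂) := by
      rw [norm_smul, Real.norm_eq_abs, abs_mul, abs_of_pos hmi, mul_assoc]
      refine mul_le_mul_of_nonneg_left ?_ hmi.le
      set X : ℝ := ‖iteratedFDeriv ℝ i (fun w : Ed d => jap (z₂ + (2:ℝ) ^ a • w)) 0‖ with hX
      have hX0 : (0:ℝ) ≤ X := norm_nonneg _
      calc |s₂| * X ≤ 1 * X := mul_le_mul_of_nonneg_right hs₂ hX0
        _ = X := one_mul _
        _ ≤ B * ρ₂ := hb2
    have htot : ‖iteratedFDeriv ℝ i F 0‖ ≤ 4 * B := by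
      rw [hde, hzero, add_zero]
      refine le_trans (norm_add_le _ _) ?_
      set X1 : ℝ := ‖(m⁻¹ * s₁) • iteratedFDeriv ℝ i (fun w : Ed d => jap (z₁ + (2:ℝ) ^ a • w)) 0‖
      set X2 : ℝ := ‖(m⁻¹ * s₂) • iteratedFDeriv ℝ i (fun w : Ed d => jap (z₂ + (2:ℝ) ^ a • w)) 0‖
      have e1 : m⁻¹ * (B * ρ₁) ≤ 2 * B := by
        rw [inv_mul_le_iff₀ hm]
        nlinarith
      have e2 : m⁻¹ * (B * ρ₂) ≤ 2 * B := by
        rw [inv_mul_le_iff₀ hm]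
        nlinarith
      linarith [hn1, hn2]
    exact htot.trans ((le_max_right 1 (4*B)).trans (le_self_pow₀ hD1 (by omega)))
  -- composition bound
  have hCb : ∀ i, i ≤ n → ‖iteratedFDeriv ℝ i invext (F 0)‖ ≤ Cinv := by
    intro i hi
    rw [hF0]
    exact hCinvb i (le_trans hi hnN)
  have hcomp := norm_iteratedFDeriv_comp_le contDiff_invext hFsm (natCast_le_inftyS n)
    (0 : Ed d) (C := Cinv) (D := D) hCb hFd
  -- assemble
  have habs : |((2:ℝ) ^ a)⁻¹| = ((2:ℝ) ^ a)⁻¹ := abs_of_pos (by positivity)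
  rw [hstep1]
  calc ‖iteratedFDeriv ℝ n H x‖
      ≤ ‖iteratedFDeriv ℝ n A 0‖ * |((2:ℝ) ^ a)⁻¹| ^ n := hstep2
    _ = m⁻¹ * ‖iteratedFDeriv ℝ n (invext ∘ F) 0‖ * (((2:ℝ) ^ a)⁻¹) ^ n := by
        rw [hstep3, habs]
    _ ≤ m⁻¹ * ((Nat.factorial n : ℝ) * Cinv * D ^ n) * (((2:ℝ) ^ a)⁻¹) ^ n := by
        have hmi : (0:ℝ) ≤ m⁻¹ := by positivity
        have hpw : (0:ℝ) ≤ (((2:ℝ) ^ a)⁻¹) ^ n := by positivity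
        exact mul_le_mul_of_nonneg_right (mul_le_mul_of_nonneg_left hcomp hmi) hpw
    _ ≤ (Nat.factorial N : ℝ) * Cinv * D ^ N * m⁻¹ * (((2:ℝ) ^ a)⁻¹) ^ n := by
        have h1 : (Nat.factorial n : ℝ) ≤ (Nat.factorial N : ℝ) := by
          exact_mod_cast Nat.factorial_le hnN
        have h2 : D ^ n ≤ D ^ N := pow_le_pow_right₀ hD1 hnN
        have h3 : (Nat.factorial n : ℝ) * Cinv * D ^ n ≤ (Nat.factorial N : ℝ) * Cinv * D ^ N := by
          have h4 : (Nat.factorial n : ℝ) * Cinv ≤ (Nat.factorial N : ℝ) * Cinv :=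
            mul_le_mul_of_nonneg_right h1 (by linarith)
          exact mul_le_mul h4 h2 (by positivity) (by nlinarith)
        have hmi : (0:ℝ) ≤ m⁻¹ := by positivity
        have hpw : (0:ℝ) ≤ (((2:ℝ) ^ a)⁻¹) ^ n := by positivity
        nlinarith [mul_le_mul_of_nonneg_right (mul_le_mul_of_nonneg_right h3 hmi) hpw]

set_option maxHeartbeats 2000000

/-- The improved localized symbol bound (A.5) for the inverse phase with ν = −:
−Φ_{μ,−}(ξ,η) ≳ 2^{k₂} and
Σ_{l=0}^{d+1} (2^{lk₁}|∂_ξ^l Φ_{μ,−}^{−1}| + 2^{lk₂}|∂_η^l Φ_{μ,−}^{−1}|) ≲ 2^{−k₂}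
for ξ, η with |ξ| ≈ 2^{k₁}, |η| ≈ 2^{k₂}, k₁ ≤ k₂ − 6 and k₂ ≥ 0. -/
theorem localized_inverse_phase_symbol_bound_minus (d : ℕ) (hd : 1 ≤ d)
    (ψ : ℝ → ℝ) (hψ : IsCutoff ψ) :
    ∃ C > (0 : ℝ), ∀ μ : ℝ, (μ = 1 ∨ μ = -1) →
      ∀ k₁ k₂ : ℤ, -1 ≤ k₁ → -1 ≤ k₂ → k₁ ≤ k₂ - 6 → 0 ≤ k₂ →
        ∀ ξ η : Ed d, psiBand ψ k₁ ξ ≠ 0 → psiBand ψ k₂ η ≠ 0 →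
          C⁻¹ * 2 ^ k₂ ≤ -phase μ (-1) ξ η ∧
          ∑ l ∈ Finset.range (d + 2),
              ((2 : ℝ) ^ ((l : ℤ) * k₁) *
                  ‖iteratedFDeriv ℝ l (fun ζ : Ed d => (phase μ (-1) ζ η)⁻¹) ξ‖ +
                (2 : ℝ) ^ ((l : ℤ) * k₂) *
                  ‖iteratedFDeriv ℝ l (fun ζ : Ed d => (phase μ (-1) ξ ζ)⁻¹) η‖) ≤
            C * 2 ^ (-k₂) := by
  obtain ⟨C0, hC01, hC0⟩ := core_bound d (d + 1)
  have hdd : (2:ℝ) ≤ ((d:ℝ) + 2) := by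
    have : (0:ℝ) ≤ (d:ℝ) := Nat.cast_nonneg d
    linarith
  refine ⟨12 * ((d:ℝ) + 2) * C0, by nlinarith, ?_⟩
  intro μ hμ k₁ k₂ hk₁ hk₂ hk₁₂ hk₂0 ξ η hξ hη
  obtain ⟨hξup, hξjap, hξlow⟩ := band_bounds hψ hξ
  obtain ⟨hηup, hηjap, hηlow⟩ := band_bounds hψ hη
  have hp1 : (0:ℝ) < 2 ^ k₁ := zpow_pos two_pos k₁
  have hp2 : (0:ℝ) < 2 ^ k₂ := zpow_pos two_pos k₂
  have hp2' : (1:ℝ) ≤ 2 ^ k₂ := one_le_zpow₀ one_le_two hk₂0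
  have hk1k2 : (2:ℝ) ^ k₁ ≤ 1/64 * 2 ^ k₂ := by
    have h1 : (2:ℝ) ^ k₁ ≤ 2 ^ (k₂ - 6) := zpow_le_zpow_right₀ one_le_two hk₁₂
    have h2 : (2:ℝ) ^ (k₂ - 6) = 2 ^ k₂ / 64 := by
      rw [zpow_sub₀ two_ne_zero]
      norm_num
    linarith [h1, h2.le]
  have hkk : (2:ℝ) ^ k₁ ≤ 2 ^ k₂ := zpow_le_zpow_right₀ one_le_two (by omega)
  have hμ1 : μ * jap ξ ≤ jap ξ := by
    rcases hμ with rfl | rfl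
    · simp
    · nlinarith [jap_pos ξ]
  have hμabs : |μ| ≤ 1 := by rcases hμ with rfl | rfl <;> norm_num
  -- lower bound on jap (ξ + η)
  have hsum : (3/16 : ℝ) * 2 ^ k₂ ≤ jap (ξ + η) := by
    rcases eq_or_lt_of_le hk₂0 with h0 | h0
    · have : (2:ℝ) ^ k₂ = 1 := by rw [← h0]; norm_num
      rw [this]
      linarith [one_le_jap (ξ + η)]
    · have hηn := hηlow h0
      have h1 : ‖η‖ ≤ ‖ξ + η‖ + ‖ξ‖ := by
        have h2 : ξ + η - ξ = η := by abel
        calc ‖η‖ = ‖ξ + η - ξ‖ := by rw [h2]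
          _ ≤ ‖ξ + η‖ + ‖ξ‖ := norm_sub_le _ _
      have h3 := norm_le_jap (ξ + η)
      linarith [hξup, hk1k2]
  -- lower bound on -phase
  have hmlow : (3/16 : ℝ) * 2 ^ k₂ ≤ -phase μ (-1) ξ η := by
    have hphase : -phase μ (-1) ξ η = jap (ξ + η) - μ * jap ξ + jap η := by
      unfold phase; ring
    rw [hphase]
    have h1 := one_le_jap (ξ + η)
    have h2 := one_le_jap η
    have h3 : jap ξ ≤ 1 + 4 * 2 ^ k₁ := le_trans (jap_le_one_add ξ) (by linarith)
    rcases eq_or_lt_of_le hk₂0 with h0 | h0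
    · have he : (2:ℝ) ^ k₂ = 1 := by rw [← h0]; norm_num
      rw [he] at hk1k2 ⊢
      linarith
    · have hηn := hηlow h0
      have h4 := norm_le_jap η
      linarith
  set m : ℝ := -phase μ (-1) ξ η with hmdef
  have hmpos : 0 < m := lt_of_lt_of_le (by positivity) hmlow
  have hminv : m⁻¹ ≤ 16/3 * 2 ^ (-k₂ : ℤ) := by
    have h1 : ((3/16 : ℝ) * 2 ^ k₂)⁻¹ = 16/3 * 2 ^ (-k₂ : ℤ) := by
      rw [mul_inv, zpow_neg]
      norm_num
    rw [← h1]
    exact inv_anti₀ (by positivity) hmlow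
  constructor
  · have hCbig : (16/3 : ℝ) ≤ 12 * ((d:ℝ) + 2) * C0 := by nlinarith
    have hinv : (12 * ((d:ℝ) + 2) * C0)⁻¹ ≤ 3/16 := by
      have h2 : (12 * ((d:ℝ) + 2) * C0)⁻¹ ≤ ((16:ℝ)/3)⁻¹ :=
        inv_anti₀ (by norm_num) hCbig
      linarith [h2, show ((16:ℝ)/3)⁻¹ = 3/16 by norm_num]
    calc (12 * ((d:ℝ) + 2) * C0)⁻¹ * 2 ^ k₂ ≤ 3/16 * 2 ^ k₂ :=
          mul_le_mul_of_nonneg_right hinv hp2.le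
      _ ≤ -phase μ (-1) ξ η := hmlow
  -- derivative bounds
  have hsm₁ : ContDiff ℝ ∞ (fun ζ : Ed d => phase μ (-1) ζ η) := by
    have he : (fun ζ : Ed d => phase μ (-1) ζ η)
        = fun ζ : Ed d => -jap (ζ + η) + μ * jap ζ + (-1) * jap η := rfl
    rw [he]
    exact (((contDiff_jap.comp (contDiff_id.add contDiff_const)).neg).add
      (contDiff_const.mul contDiff_jap)).add contDiff_const
  have hsm₂ : ContDiff ℝ ∞ (fun ζ : Ed d => phase μ (-1) ξ ζ) := by
    have he : (fun ζ : Ed d => phase μ (-1) ξ ζ)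
        = fun ζ : Ed d => -jap (ξ + ζ) + μ * jap ξ + (-1) * jap ζ := rfl
    rw [he]
    exact (((contDiff_jap.comp (contDiff_const.add contDiff_id)).neg).add
      contDiff_const).add (contDiff_const.mul contDiff_jap)
  have habs1 : |(-1 : ℝ)| ≤ 1 := by norm_num
  have Hξ := hC0 (fun ζ : Ed d => phase μ (-1) ζ η) hsm₁ ξ k₁ (-1) μ ((-1) * jap η)
    (ξ + η) ξ ((3/16) * 2 ^ k₂) ((1/4) * 2 ^ k₁) m habs1 hμabs
    (fun w => by
      show phase μ (-1) (ξ + (2:ℝ) ^ k₁ • w) η = _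
      have harg : (ξ + (2:ℝ) ^ k₁ • w) + η = (ξ + η) + (2:ℝ) ^ k₁ • w := by abel
      unfold phase
      rw [harg]
      ring)
    (by positivity) hsum (by linarith) (by linarith)
    (by positivity) hξjap (by linarith) (by nlinarith)
    (by rw [hmdef]; ring) hmpos
  have Hη := hC0 (fun ζ : Ed d => phase μ (-1) ξ ζ) hsm₂ η k₂ (-1) (-1) (μ * jap ξ)
    (ξ + η) η ((3/16) * 2 ^ k₂) ((1/4) * 2 ^ k₂) m habs1 habs1
    (fun w => by
      show phase μ (-1) ξ (η + (2:ℝ) ^ k₂ • w) = _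
      have harg : ξ + (η + (2:ℝ) ^ k₂ • w) = (ξ + η) + (2:ℝ) ^ k₂ • w := by abel
      unfold phase
      rw [harg]
      ring)
    (by positivity) hsum (by linarith) (by linarith)
    (by positivity) hηjap (by linarith) (by linarith)
    (by rw [hmdef]; ring) hmpos
  -- summation
  have hterm : ∀ l ∈ Finset.range (d + 2),
      (2 : ℝ) ^ ((l : ℤ) * k₁) *
          ‖iteratedFDeriv ℝ l (fun ζ : Ed d => (phase μ (-1) ζ η)⁻¹) ξ‖ +
        (2 : ℝ) ^ ((l : ℤ) * k₂) *
          ‖iteratedFDeriv ℝ l (fun ζ : Ed d => (phase μ (-1) ξ ζ)⁻¹) η‖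
      ≤ 12 * C0 * 2 ^ (-k₂ : ℤ) := by
    intro l hl
    have hlN : l ≤ d + 1 := by
      have := Finset.mem_range.1 hl
      omega
    have hzp : ∀ k : ℤ, (((2:ℝ) ^ k)⁻¹) ^ l = (2:ℝ) ^ (-(k * l)) := by
      intro k
      rw [← zpow_neg, ← zpow_natCast ((2:ℝ) ^ (-k)) l, ← zpow_mul]
      ring_nf
    have hcancel : ∀ k : ℤ, (2:ℝ) ^ ((l : ℤ) * k) * (2:ℝ) ^ (-(k * l)) = 1 := by
      intro k
      rw [← zpow_add₀ (two_ne_zero : (2:ℝ) ≠ 0)]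
      have : (l : ℤ) * k + -(k * l) = 0 := by ring
      rw [this, zpow_zero]
    have hb1 : (2 : ℝ) ^ ((l : ℤ) * k₁) *
        ‖iteratedFDeriv ℝ l (fun ζ : Ed d => (phase μ (-1) ζ η)⁻¹) ξ‖
        ≤ C0 * m⁻¹ := by
      have h := Hξ l hlN
      rw [hzp k₁] at h
      calc (2 : ℝ) ^ ((l : ℤ) * k₁) *
            ‖iteratedFDeriv ℝ l (fun ζ : Ed d => (phase μ (-1) ζ η)⁻¹) ξ‖
          ≤ (2 : ℝ) ^ ((l : ℤ) * k₁) * (C0 * m⁻¹ * (2:ℝ) ^ (-(k₁ * l))) :=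
            mul_le_mul_of_nonneg_left h (by positivity)
        _ = C0 * m⁻¹ * ((2:ℝ) ^ ((l : ℤ) * k₁) * (2:ℝ) ^ (-(k₁ * l))) := by ring
        _ = C0 * m⁻¹ := by rw [hcancel k₁, mul_one]
    have hb2 : (2 : ℝ) ^ ((l : ℤ) * k₂) *
        ‖iteratedFDeriv ℝ l (fun ζ : Ed d => (phase μ (-1) ξ ζ)⁻¹) η‖
        ≤ C0 * m⁻¹ := by
      have h := Hη l hlN
      rw [hzp k₂] at h
      calc (2 : ℝ) ^ ((l : ℤ) * k₂) *
            ‖iteratedFDeriv ℝ l (fun ζ : Ed d => (phase μ (-1) ξ ζ)⁻¹) η‖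
          ≤ (2 : ℝ) ^ ((l : ℤ) * k₂) * (C0 * m⁻¹ * (2:ℝ) ^ (-(k₂ * l))) :=
            mul_le_mul_of_nonneg_left h (by positivity)
        _ = C0 * m⁻¹ * ((2:ℝ) ^ ((l : ℤ) * k₂) * (2:ℝ) ^ (-(k₂ * l))) := by ring
        _ = C0 * m⁻¹ := by rw [hcancel k₂, mul_one]
    have hCm : C0 * m⁻¹ ≤ 6 * C0 * 2 ^ (-k₂ : ℤ) := by
      have h1 : C0 * m⁻¹ ≤ C0 * (16/3 * 2 ^ (-k₂ : ℤ)) :=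
        mul_le_mul_of_nonneg_left hminv (by linarith)
      have h2 : (0:ℝ) < 2 ^ (-k₂ : ℤ) := zpow_pos two_pos _
      nlinarith
    linarith
  have hsum2 := Finset.sum_le_sum hterm
  refine le_trans hsum2 ?_
  rw [Finset.sum_const, Finset.card_range, nsmul_eq_mul]
  have h2 : (0:ℝ) < 2 ^ (-k₂ : ℤ) := zpow_pos two_pos _
  have hcast : ((d + 2 : ℕ) : ℝ) = (d:ℝ) + 2 := by push_cast; ring
  rw [hcast]
  have hfin : ((d:ℝ) + 2) * (12 * C0 * 2 ^ (-k₂ : ℤ)) = 12 * ((d:ℝ) + 2) * C0 * 2 ^ (-k₂ : ℤ) := by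
    ring
  rw [hfin]
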